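/- arXiv:1111.5846 — 2 statements merged into one kernel-verified Lean document; each statement's English description precedes it below -/
import Mathlib

section
/- Subsequence convergence lemma (linear case): given for each N ≥ N₀ a solution û^N of the approximating ODE with û^N(0) ∈ W^N and ‖û^N(0) − u^N(0)‖_N = ρ, there exists a subsequence N_k → ∞ such that Φ^{N_k}∘û^{N_k} converges uniformly on [0,T] (in X) to a solution û of the evolution problem satisfying û(0) ∈ W and ‖û(0) − u(0)‖_X = ρ. -/
/-!
Write `û^N(0) - u^N(0) = P^N(∑ bᴺᵢ eᵢ)`. The seminorms `x ↦ ‖P^N(∑ xᵢ eᵢ)‖_N` on `ℝ^s` converge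
pointwise to the norm `x ↦ ‖∑ xᵢ eᵢ‖`, hence are equi-Lipschitz, and they all take the value `ρ`
at `bᴺ`. Compactness of the unit ball, applied to `bᴺ / (1 + ‖bᴺ‖)`, and injectivity of
`x ↦ ∑ xᵢ eᵢ` give a subsequence `bᴺᵏ → b` with `‖∑ bᵢ eᵢ‖ = ρ`.

Let `û` be the solution issued from `u(0) + ∑ bᵢ eᵢ`. By linearity of the ODE, `û^N` differs from
an approximate solution issued from `P^N(û(0))` by `∑ (bᴺᵢ - bᵢ) ηᴺᵢ`, where `ηᴺᵢ` solves the
homogeneous ODE from `P^N(eᵢ)`. The scheme shows that `Φ^N ηᴺᵢ` converges uniformly to the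
difference of the solutions issued from `u(0) + eᵢ` and `u(0)`, so the correction vanishes in the
limit along the subsequence.
-/

open Set Filter Topology

/-- `u` is a solution of the linear evolution problem `u' + 𝓛 u = g` on `[0,T]`:
`u` is continuous on `[0,T]`, takes values in `D_B`, and is differentiable with
`u'(t) + 𝓛(u(t)) = g(t)` on `(0,T]`. -/
def IsSolPDE {X : Type*} [NormedAddCommGroup X] [NormedSpace ℝ X]
    (T : ℝ) (DB : Submodule ℝ X) (L : DB →ₗ[ℝ] X) (g : ℝ → X) (u : ℝ → X) : Prop :=
  ContinuousOn u (Set.Icc 0 T) ∧ (∀ t ∈ Set.Icc 0 T, u t ∈ DB) ∧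
    ∀ t ∈ Set.Ioc 0 T, ∃ hm : u t ∈ DB, HasDerivAt u (g t - L ⟨u t, hm⟩) t

/-- `v` is a solution of the approximating ODE `v' + A v = gN` on `[0,T]`. -/
def IsSolODE {n : ℕ} (T : ℝ) (A : Matrix (Fin n) (Fin n) ℝ) (gN : ℝ → Fin n → ℝ)
    (v : ℝ → Fin n → ℝ) : Prop :=
  ContinuousOn v (Set.Icc 0 T) ∧ ∀ t ∈ Set.Ioc 0 T, HasDerivAt v (gN t - A.mulVec (v t)) t

section FiniteDimSeminorm

variable {ι : Type*} [Fintype ι]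

theorem Seminorm.exists_forall_le_mul_norm_of_tendsto {p : ℕ → Seminorm ℝ (ι → ℝ)}
    {q : (ι → ℝ) → ℝ} (hp : ∀ x, Tendsto (fun n => p n x) atTop (𝓝 (q x))) :
    ∃ C, ∀ n x, p n x ≤ C * ‖x‖ := by
  classical
  choose M hM using fun i : ι => (hp (Pi.single i 1)).bddAbove_range
  refine ⟨∑ i, M i, fun n x => ?_⟩
  calc p n x = p n (∑ i, x i • Pi.single i 1) := by rw [← pi_eq_sum_univ' x]
    _ ≤ ∑ i, p n (x i • Pi.single i 1) :=
        Finset.le_sum_of_subadditive (p n) (map_zero _).le (map_add_le_add _) _ _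
    _ ≤ ∑ i, M i * ‖x‖ := by
        gcongr with i
        rw [map_smul_eq_mul, mul_comm]
        exact mul_le_mul (hM i ⟨n, rfl⟩) (norm_le_pi_norm x i) (norm_nonneg _)
          ((apply_nonneg _ _).trans (hM i ⟨n, rfl⟩))
    _ = (∑ i, M i) * ‖x‖ := Finset.sum_mul _ _ _ |>.symm

theorem Seminorm.tendsto_apply_of_tendsto {p : ℕ → Seminorm ℝ (ι → ℝ)} {q : (ι → ℝ) → ℝ}
    (hp : ∀ x, Tendsto (fun n => p n x) atTop (𝓝 (q x))) {x : ℕ → ι → ℝ} {x₀ : ι → ℝ}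
    (hx : Tendsto x atTop (𝓝 x₀)) : Tendsto (fun n => p n (x n)) atTop (𝓝 (q x₀)) := by
  obtain ⟨C, hC⟩ := Seminorm.exists_forall_le_mul_norm_of_tendsto hp
  have hdiff : Tendsto (fun n => p n (x n) - p n x₀) atTop (𝓝 0) := by
    refine squeeze_zero_norm (fun n => ((p n).norm_sub_map_le_sub _ _).trans (hC n _)) ?_
    simpa using ((hx.sub_const x₀).norm.const_mul C)
  simpa using hdiff.add (hp x₀)

theorem exists_subseq_tendsto_of_seminorm_eq {X : Type*} [NormedAddCommGroup X]
    [NormedSpace ℝ X] {f : (ι → ℝ) →ₗ[ℝ] X} (hf : Function.Injective f)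
    {p : ℕ → Seminorm ℝ (ι → ℝ)} (hp : ∀ x, Tendsto (fun n => p n x) atTop (𝓝 ‖f x‖))
    {b : ℕ → ι → ℝ} {ρ : ℝ} (hb : ∀ n, p n (b n) = ρ) :
    ∃ φ : ℕ → ℕ, StrictMono φ ∧ ∃ b₀, Tendsto (b ∘ φ) atTop (𝓝 b₀) ∧ ‖f b₀‖ = ρ := by
  set c : ℕ → ι → ℝ := fun n => (1 + ‖b n‖)⁻¹ • b n
  have hpos : ∀ n, 0 < 1 + ‖b n‖ := fun n => by positivity
  have hc_norm : ∀ n, 1 - ‖c n‖ = (1 + ‖b n‖)⁻¹ := fun n => by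
    rw [norm_smul, norm_inv, Real.norm_of_nonneg (hpos n).le]
    field_simp
    ring
  have hc_ball : ∀ n, c n ∈ Metric.closedBall (0 : ι → ℝ) 1 := fun n => by
    rw [mem_closedBall_zero_iff]
    linarith [hc_norm n, inv_pos.mpr (hpos n)]
  have hb_eq : ∀ n, b n = (1 - ‖c n‖)⁻¹ • c n := fun n => by
    rw [hc_norm, inv_inv, smul_smul, mul_inv_cancel₀ (hpos n).ne', one_smul]
  have hpc : ∀ n, p n (c n) = (1 - ‖c n‖) * ρ := fun n => by
    rw [map_smul_eq_mul, hb n, norm_inv, Real.norm_of_nonneg (hpos n).le, hc_norm]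
  obtain ⟨c₀, hc₀, φ, hφ, hlim⟩ := (isCompact_closedBall (0 : ι → ℝ) 1).tendsto_subseq hc_ball
  have hlim_norm : Tendsto (fun k => 1 - ‖c (φ k)‖) atTop (𝓝 (1 - ‖c₀‖)) :=
    tendsto_const_nhds.sub hlim.norm
  have hfc₀ : ‖f c₀‖ = (1 - ‖c₀‖) * ρ := by
    refine tendsto_nhds_unique
      (Seminorm.tendsto_apply_of_tendsto (fun x => (hp x).comp hφ.tendsto_atTop) hlim) ?_
    simpa only [Function.comp_apply, hpc] using hlim_norm.mul_const ρ
  have hc₀_lt : 0 < 1 - ‖c₀‖ := by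
    refine sub_pos.mpr (lt_of_le_of_ne (mem_closedBall_zero_iff.mp hc₀) fun h => ?_)
    rw [h, sub_self, zero_mul, norm_eq_zero, ← map_zero f] at hfc₀
    simp [hf hfc₀] at h
  refine ⟨φ, hφ, (1 - ‖c₀‖)⁻¹ • c₀, ?_, ?_⟩
  · simpa only [Function.comp_def, ← hb_eq] using (hlim_norm.inv₀ hc₀_lt.ne').smul hlim
  · rw [map_smul, norm_smul, hfc₀, norm_inv, Real.norm_of_nonneg hc₀_lt.le]
    field_simp

end FiniteDimSeminorm

theorem tendstoUniformlyOn_finset_sum {κ ι α E : Type*} [AddCommGroup E] [UniformSpace E]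
    [IsUniformAddGroup E] {F : κ → ι → α → E} {f : κ → α → E} {l : Filter ι} {s : Set α}
    (t : Finset κ) (h : ∀ i ∈ t, TendstoUniformlyOn (F i) (f i) l s) :
    TendstoUniformlyOn (fun n x => ∑ i ∈ t, F i n x) (fun x => ∑ i ∈ t, f i x) l s := by
  classical
  induction t using Finset.induction_on with
  | empty => simpa using tendsto_const_nhds.tendstoUniformlyOn_const (p := l) (b := (0 : E)) s
  | insert a t ha ih =>
    simp only [Finset.sum_insert ha]
    exact (h a (Finset.mem_insert_self a t)).add (ih fun i hi => h i (Finset.mem_insert_of_mem hi))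

theorem TendstoUniformlyOn.smul_of_tendsto {ι α 𝕜 E : Type*} [TopologicalSpace α] [NormedField 𝕜]
    [NormedAddCommGroup E] [NormedSpace 𝕜 E] {c : ι → 𝕜} {c₀ : 𝕜} {F : ι → α → E} {f : α → E}
    {l : Filter ι} {s : Set α} (hs : IsCompact s) (hc : Tendsto c l (𝓝 c₀))
    (hF : TendstoUniformlyOn F f l s) (hf : ContinuousOn f s) :
    TendstoUniformlyOn (fun n x => c n • F n x) (fun x => c₀ • f x) l s := by
  rw [← tendstoLocallyUniformlyOn_iff_tendstoUniformlyOn_of_compact hs] at hF ⊢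
  exact (hc.tendstoUniformlyOn_const s).tendstoLocallyUniformlyOn.smul₀ hF continuousOn_const hf

section LinearODE

variable {n : ℕ} {T : ℝ} {A : Matrix (Fin n) (Fin n) ℝ}

theorem IsSolODE.add {g₁ g₂ v₁ v₂ : ℝ → Fin n → ℝ} (h₁ : IsSolODE T A g₁ v₁)
    (h₂ : IsSolODE T A g₂ v₂) : IsSolODE T A (g₁ + g₂) (v₁ + v₂) :=
  ⟨h₁.1.add h₂.1, fun t ht => ((h₁.2 t ht).add (h₂.2 t ht)).congr_deriv <| by
    simp only [Pi.add_apply, Matrix.mulVec_add]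
    abel⟩

theorem IsSolODE.const_smul (c : ℝ) {g v : ℝ → Fin n → ℝ} (h : IsSolODE T A g v) :
    IsSolODE T A (c • g) (c • v) :=
  ⟨h.1.const_smul c, fun t ht => ((h.2 t ht).const_smul c).congr_deriv <| by
    simp only [Pi.smul_apply, Matrix.mulVec_smul, smul_sub]⟩

variable (T A) in
def homogeneousSolODE : Submodule ℝ (ℝ → Fin n → ℝ) where
  carrier := {v | IsSolODE T A 0 v}
  add_mem' h₁ h₂ := by simpa using h₁.add h₂
  zero_mem' := ⟨continuousOn_const, fun t _ => by simp⟩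
  smul_mem' c _ h := by simpa using h.const_smul c

theorem IsSolODE.add_homogeneous {g v w : ℝ → Fin n → ℝ} (hv : IsSolODE T A g v)
    (hw : w ∈ homogeneousSolODE T A) : IsSolODE T A g (v + w) := by
  simpa using hv.add hw

theorem IsSolODE.sub_homogeneous {g v w : ℝ → Fin n → ℝ} (hv : IsSolODE T A g v)
    (hw : w ∈ homogeneousSolODE T A) : IsSolODE T A g (v - w) := by
  simpa [sub_eq_add_neg] using hv.add_homogeneous (neg_mem hw)

theorem exists_mem_homogeneousSolODE (v₀ : Fin n → ℝ) :
    ∃ η ∈ homogeneousSolODE T A, η 0 = v₀ := by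
  set B : (Fin n → ℝ) →L[ℝ] (Fin n → ℝ) := LinearMap.toContinuousLinearMap (Matrix.toLin' (-A))
  have hη : ∀ t, HasDerivAt (fun t => NormedSpace.exp (t • B) v₀)
      (-A.mulVec (NormedSpace.exp (t • B) v₀)) t := fun t =>
    ((hasDerivAt_exp_smul_const' (𝕂 := ℝ) B t).clm_apply (hasDerivAt_const t v₀)).congr_deriv <| by
      simp [B]
  refine ⟨fun t => NormedSpace.exp (t • B) v₀, ⟨fun t _ => (hη t).continuousAt.continuousWithinAt,
    fun t _ => by simpa using hη t⟩, by simp⟩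

end LinearODE

section Scheme

variable {X : Type*} [NormedAddCommGroup X] [NormedSpace ℝ X] {T : ℝ} {DB : Submodule ℝ X}
  {L : DB →ₗ[ℝ] X} {g : ℝ → X} {N₀ : ℕ} {A : ∀ N : ℕ, Matrix (Fin N) (Fin N) ℝ}
  {gN : ∀ N : ℕ, ℝ → Fin N → ℝ} {P : ∀ N : ℕ, DB →ₗ[ℝ] (Fin N → ℝ)}
  {Φ : ∀ N : ℕ, (Fin N → ℝ) →ₗ[ℝ] X}

theorem exists_subseq_tendsto_coeff {nN : ∀ N : ℕ, Seminorm ℝ (Fin N → ℝ)}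
    (hP : ∀ v : DB, Tendsto (fun N => nN N (P N v)) atTop (𝓝 ‖(v : X)‖))
    {ι : Type*} [Fintype ι] {w : ι → DB} (hw : LinearIndependent ℝ fun i => (w i : X))
    {b : ℕ → ι → ℝ} {ρ : ℝ} (hb : ∀ N, N₀ ≤ N → nN N (∑ i, b N i • P N (w i)) = ρ) :
    ∃ φ : ℕ → ℕ, StrictMono φ ∧ (∀ k, N₀ ≤ φ k) ∧
      ∃ b₀, Tendsto (b ∘ φ) atTop (𝓝 b₀) ∧ ‖∑ i, b₀ i • (w i : X)‖ = ρ := by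
  set E : (ι → ℝ) →ₗ[ℝ] DB := Fintype.linearCombination ℝ w
  have hE : ∀ x, (E x : X) = Fintype.linearCombination ℝ (fun i => (w i : X)) x := fun x => by
    simp [E, Fintype.linearCombination_apply]
  have hPE : ∀ N x, P N (E x) = ∑ i, x i • P N (w i) := fun N x => by
    simp only [E, Fintype.linearCombination_apply, map_sum, map_smul]
  obtain ⟨φ, hφ, b₀, hb₀, hb₀ρ⟩ := exists_subseq_tendsto_of_seminorm_eq
    (linearIndependent_iff_injective_fintypeLinearCombination.mp hw)
    (p := fun n => (nN (n + N₀)).comp (P (n + N₀) ∘ₗ E)) (b := fun n => b (n + N₀)) (ρ := ρ)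
    (fun x => by
      simpa [hE, Function.comp_def] using (hP (E x)).comp (tendsto_add_atTop_nat N₀))
    (fun n => by simpa [hPE] using hb (n + N₀) (Nat.le_add_left _ _))
  refine ⟨fun k => φ k + N₀, fun k l hkl => by simpa using hφ hkl, fun k => Nat.le_add_left _ _,
    b₀, hb₀, by simpa [Fintype.linearCombination_apply] using hb₀ρ⟩

variable (T DB L g N₀ A gN P Φ) in
def IsConvergentScheme : Prop :=
  ∀ u : ℝ → X, IsSolPDE T DB L g u →
    ∀ v : (N : ℕ) → ℝ → Fin N → ℝ, (∀ N, N₀ ≤ N → IsSolODE T (A N) (gN N) (v N)) →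
      (∀ N, N₀ ≤ N → ∃ hm : u 0 ∈ DB, v N 0 = P N ⟨u 0, hm⟩) →
        TendstoUniformlyOn (fun N t => Φ N (v N t)) u atTop (Icc 0 T)

/-- `uN + η` approximates the solution issued from `u 0 + w`, and `uN` approximates `u`. -/
theorem IsConvergentScheme.tendstoUniformlyOn_homogeneous
    (hS : IsConvergentScheme T DB L g N₀ A gN P Φ) {u y : ℝ → X} (hu : IsSolPDE T DB L g u)
    (hy : IsSolPDE T DB L g y) {w : DB} (hy0 : y 0 = u 0 + w) {uN : ∀ N : ℕ, ℝ → Fin N → ℝ}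
    (huN : ∀ N, N₀ ≤ N → IsSolODE T (A N) (gN N) (uN N))
    (huN0 : ∀ N, N₀ ≤ N → ∃ hm : u 0 ∈ DB, uN N 0 = P N ⟨u 0, hm⟩)
    {η : ∀ N : ℕ, ℝ → Fin N → ℝ} (hη : ∀ N, η N ∈ homogeneousSolODE T (A N))
    (hη0 : ∀ N, η N 0 = P N w) :
    TendstoUniformlyOn (fun N t => Φ N (η N t)) (y - u) atTop (Icc 0 T) := by
  have hy_lim := hS y hy (fun N => uN N + η N) (fun N hN => (huN N hN).add_homogeneous (hη N))
    fun N hN => by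
      obtain ⟨hm, huN0⟩ := huN0 N hN
      refine ⟨hy0 ▸ DB.add_mem hm w.2, ?_⟩
      rw [Pi.add_apply, huN0, hη0, ← map_add]
      congr 1
      exact Subtype.ext hy0.symm
  refine (hy_lim.sub (hS u hu uN huN huN0)).congr (Eventually.of_forall fun N t _ => ?_)
  simp

theorem IsConvergentScheme.tendstoUniformlyOn_of_tendsto_coeff
    (hS : IsConvergentScheme T DB L g N₀ A gN P Φ)
    (hexist : ∀ u₀ ∈ DB, ∃ u : ℝ → X, IsSolPDE T DB L g u ∧ u 0 = u₀)
    {u : ℝ → X} (hu : IsSolPDE T DB L g u) {uN : ∀ N : ℕ, ℝ → Fin N → ℝ}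
    (huN : ∀ N, N₀ ≤ N → IsSolODE T (A N) (gN N) (uN N))
    (huN0 : ∀ N, N₀ ≤ N → ∃ hm : u 0 ∈ DB, uN N 0 = P N ⟨u 0, hm⟩)
    {ι : Type*} [Fintype ι] (w : ι → DB) {b : ℕ → ι → ℝ} {v : ∀ N : ℕ, ℝ → Fin N → ℝ}
    (hv : ∀ N, N₀ ≤ N → IsSolODE T (A N) (gN N) (v N))
    (hv0 : ∀ N, N₀ ≤ N → v N 0 = uN N 0 + ∑ i, b N i • P N (w i))
    {φ : ℕ → ℕ} (hφ : Tendsto φ atTop atTop) {b₀ : ι → ℝ} (hb : Tendsto (b ∘ φ) atTop (𝓝 b₀))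
    {uhat : ℝ → X} (huhat : IsSolPDE T DB L g uhat)
    (huhat0 : uhat 0 = u 0 + ∑ i, b₀ i • (w i : X)) :
    TendstoUniformlyOn (fun k t => Φ (φ k) (v (φ k) t)) uhat atTop (Icc 0 T) := by
  obtain ⟨hu0, -⟩ := huN0 N₀ le_rfl
  choose η hη hη0 using fun N i => exists_mem_homogeneousSolODE (T := T) (A := A N) (P N (w i))
  choose y hy hy0 using fun i => hexist (u 0 + w i) (DB.add_mem hu0 (w i).2)
  have hη_lim : ∀ i, TendstoUniformlyOn (fun k t => Φ (φ k) (η (φ k) i t)) (y i - u) atTop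
      (Icc 0 T) := fun i =>
    (hS.tendstoUniformlyOn_homogeneous hu (hy i) (hy0 i) huN huN0 (fun N => hη N i)
      fun N => hη0 N i).seq_tendstoUniformlyOn φ hφ
  -- `vc N` starts from `P N (uhat 0)`, so the scheme applies to it.
  set vc : ∀ N : ℕ, ℝ → Fin N → ℝ := fun N => v N - ∑ i, (b N i - b₀ i) • η N i
  have hvc0 : ∀ N, N₀ ≤ N → ∃ hm : uhat 0 ∈ DB, vc N 0 = P N ⟨uhat 0, hm⟩ := fun N hN => by
    obtain ⟨hm, huN0⟩ := huN0 N hN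
    have huhat_mem : uhat 0 ∈ DB :=
      huhat0 ▸ DB.add_mem hm (DB.sum_mem fun i _ => DB.smul_mem _ (w i).2)
    have : (⟨uhat 0, huhat_mem⟩ : DB) = ⟨u 0, hm⟩ + ∑ i, b₀ i • w i :=
      Subtype.ext (by simp [huhat0])
    refine ⟨huhat_mem, ?_⟩
    simp only [vc, this, map_add, map_sum, map_smul, Pi.sub_apply, Finset.sum_apply, Pi.smul_apply,
      hv0 N hN, huN0, hη0, sub_smul, Finset.sum_sub_distrib]
    abel
  have hvc_lim : TendstoUniformlyOn (fun k t => Φ (φ k) (vc (φ k) t)) uhat atTop (Icc 0 T) :=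
    (hS uhat huhat vc (fun N hN => (hv N hN).sub_homogeneous
      (Submodule.sum_mem _ fun i _ => Submodule.smul_mem _ _ (hη N i))) hvc0).seq_tendstoUniformlyOn
      φ hφ
  have hrest_lim : TendstoUniformlyOn
      (fun k t => ∑ i, (b (φ k) i - b₀ i) • Φ (φ k) (η (φ k) i t))
      (fun t => ∑ i, (0 : ℝ) • (y i - u) t) atTop (Icc 0 T) :=
    tendstoUniformlyOn_finset_sum _ fun i _ => (hη_lim i).smul_of_tendsto isCompact_Icc
      (by simpa using ((tendsto_pi_nhds.mp hb i).sub_const (b₀ i))) ((hy i).1.sub hu.1)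
  refine ((hvc_lim.add hrest_lim).congr (Eventually.of_forall fun k t _ => ?_)).congr_right
    fun t _ => ?_
  · simp [vc, map_sub, map_sum, map_smul]
  · simp

end Scheme

theorem subsequence_convergence_linear_general
    {X : Type*} [NormedAddCommGroup X] [NormedSpace ℝ X]
    {T : ℝ}
    (DB : Submodule ℝ X) (L : DB →ₗ[ℝ] X) (g : ℝ → X)
    -- well-posedness of the evolution problem
    (hexist : ∀ u₀ ∈ DB, ∃ u : ℝ → X, IsSolPDE T DB L g u ∧ u 0 = u₀)
    -- the space for estimation `W = span{e₁,…,e_s} ⊆ D_B`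
    {s : ℕ} (e : Fin s → X) (he : ∀ i, e i ∈ DB) (hli : LinearIndependent ℝ e)
    -- approximation scheme data
    (N₀ : ℕ) (A : ∀ N : ℕ, Matrix (Fin N) (Fin N) ℝ) (gN : ∀ N : ℕ, ℝ → Fin N → ℝ)
    (P : ∀ N : ℕ, DB →ₗ[ℝ] (Fin N → ℝ)) (Φ : ∀ N : ℕ, (Fin N → ℝ) →ₗ[ℝ] X)
    (nN : ∀ N : ℕ, Seminorm ℝ (Fin N → ℝ))
    -- well-posedness of the approximation scheme
    (hscheme1 : ∀ u : ℝ → X, IsSolPDE T DB L g u →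
      ∀ v : (N : ℕ) → ℝ → Fin N → ℝ, (∀ N, N₀ ≤ N → IsSolODE T (A N) (gN N) (v N)) →
      (∀ N, N₀ ≤ N → ∃ hm : u 0 ∈ DB, v N 0 = P N ⟨u 0, hm⟩) →
      TendstoUniformlyOn (fun N t => Φ N (v N t)) u atTop (Set.Icc 0 T))
    (hscheme2 : ∀ v : DB, Tendsto (fun N => nN N (P N v)) atTop (nhds ‖(v : X)‖))
    -- the nominal trajectory `u` with `u(0) ∈ W` and its approximations `u^N`
    (ρ : ℝ)
    (u : ℝ → X) (hu : IsSolPDE T DB L g u)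
    (hu0 : u 0 ∈ Submodule.span ℝ (Set.range e))
    (uN : ∀ N : ℕ, ℝ → Fin N → ℝ) (huN : ∀ N, N₀ ≤ N → IsSolODE T (A N) (gN N) (uN N))
    (huN0 : ∀ N, N₀ ≤ N → ∃ hm : u 0 ∈ DB, uN N 0 = P N ⟨u 0, hm⟩)
    -- the given family of ODE solutions
    (uhatN : ∀ N : ℕ, ℝ → Fin N → ℝ)
    (huhatN : ∀ N, N₀ ≤ N → IsSolODE T (A N) (gN N) (uhatN N))
    (huhatN0 : ∀ N, N₀ ≤ N →
      uhatN N 0 ∈ Submodule.span ℝ (Set.range fun i : Fin s => P N ⟨e i, he i⟩))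
    (huhatNρ : ∀ N, N₀ ≤ N → nN N (uhatN N 0 - uN N 0) = ρ) :
    ∃ φ : ℕ → ℕ, StrictMono φ ∧ (∀ k, N₀ ≤ φ k) ∧
      ∃ uhat : ℝ → X, IsSolPDE T DB L g uhat ∧
        uhat 0 ∈ Submodule.span ℝ (Set.range e) ∧ ‖uhat 0 - u 0‖ = ρ ∧
        TendstoUniformlyOn (fun k t => Φ (φ k) (uhatN (φ k) t)) uhat atTop (Set.Icc 0 T) := by
  obtain ⟨hu0DB, -⟩ := huN0 N₀ le_rfl
  obtain ⟨a, ha⟩ := (Submodule.mem_span_range_iff_exists_fun ℝ).mp hu0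
  have hcoeff : ∀ N, ∃ b : Fin s → ℝ, N₀ ≤ N →
      uhatN N 0 = uN N 0 + ∑ i, b i • P N ⟨e i, he i⟩ := fun N => by
    by_cases hN : N₀ ≤ N
    · obtain ⟨c, hc⟩ := (Submodule.mem_span_range_iff_exists_fun ℝ).mp (huhatN0 N hN)
      obtain ⟨hm, huN0⟩ := huN0 N hN
      have : (⟨u 0, hm⟩ : DB) = ∑ i, a i • ⟨e i, he i⟩ := Subtype.ext (by simp [ha])
      refine ⟨c - a, fun _ => ?_⟩
      simp only [huN0, this, map_sum, map_smul, Pi.sub_apply, sub_smul, Finset.sum_sub_distrib, hc]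
      abel
    · exact ⟨0, fun h => absurd h hN⟩
  choose b hb using hcoeff
  obtain ⟨φ, hφ, hφN₀, b₀, hb₀, hb₀ρ⟩ := exists_subseq_tendsto_coeff hscheme2
    (w := fun i => ⟨e i, he i⟩) hli (b := b) (ρ := ρ) fun N hN => by
      rw [← huhatNρ N hN, hb N hN, add_sub_cancel_left]
  obtain ⟨uhat, huhat, huhat0⟩ :=
    hexist (u 0 + ∑ i, b₀ i • e i) (DB.add_mem hu0DB (DB.sum_mem fun i _ => DB.smul_mem _ (he i)))
  refine ⟨φ, hφ, hφN₀, uhat, huhat, ?_, by rwa [huhat0, add_sub_cancel_left], ?_⟩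
  · rw [huhat0]
    exact add_mem hu0 ((Submodule.mem_span_range_iff_exists_fun ℝ).mpr ⟨b₀, rfl⟩)
  · exact IsConvergentScheme.tendstoUniformlyOn_of_tendsto_coeff hscheme1 hexist hu huN huN0
      (fun i => ⟨e i, he i⟩) huhatN hb hφ.tendsto_atTop hb₀ huhat huhat0

/-- Subsequence convergence lemma (linear case): from any family `uhat^N` of solutions of
the approximating ODEs with `uhat^N(0) ∈ W^N` and `‖uhat^N(0) − u^N(0)‖_N = ρ`, one can
extract a subsequence `N_k` such that `Φ^{N_k} ∘ uhat^{N_k}` converges uniformly on `[0,T]`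
to a solution `uhat` of the evolution problem with `uhat(0) ∈ W` and `‖uhat(0) − u(0)‖_X = ρ`. -/
theorem subsequence_convergence_linear
    {X : Type*} [NormedAddCommGroup X] [NormedSpace ℝ X] [CompleteSpace X]
    {T : ℝ} (hT : 0 < T)
    (DB : Submodule ℝ X) (L : DB →ₗ[ℝ] X) (g : ℝ → X) (hg : ContinuousOn g (Set.Icc 0 T))
    -- well-posedness of the evolution problem
    (hexist : ∀ u₀ ∈ DB, ∃ u : ℝ → X, IsSolPDE T DB L g u ∧ u 0 = u₀)
    (huniq : ∀ u v : ℝ → X, IsSolPDE T DB L g u → IsSolPDE T DB L g v → u 0 = v 0 →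
      ∀ t ∈ Set.Icc 0 T, u t = v t)
    (hcontdep : ∀ (v : ℕ → ℝ → X) (w : ℝ → X), (∀ k, IsSolPDE T DB L g (v k)) →
      IsSolPDE T DB L g w → Tendsto (fun k => v k 0) atTop (nhds (w 0)) →
      TendstoUniformlyOn (fun k t => v k t) w atTop (Set.Icc 0 T))
    -- the space for estimation `W = span{e₁,…,e_s} ⊆ D_B`
    {s : ℕ} (e : Fin s → X) (he : ∀ i, e i ∈ DB) (hli : LinearIndependent ℝ e)
    -- approximation scheme data
    (N₀ : ℕ) (A : ∀ N : ℕ, Matrix (Fin N) (Fin N) ℝ) (gN : ∀ N : ℕ, ℝ → Fin N → ℝ)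
    (hgN : ∀ N, N₀ ≤ N → ContinuousOn (gN N) (Set.Icc 0 T))
    (P : ∀ N : ℕ, DB →ₗ[ℝ] (Fin N → ℝ)) (Φ : ∀ N : ℕ, (Fin N → ℝ) →ₗ[ℝ] X)
    (nN : ∀ N : ℕ, Seminorm ℝ (Fin N → ℝ))
    (hnN : ∀ N (v : Fin N → ℝ), nN N v = 0 → v = 0)
    -- well-posedness of the approximation scheme
    (hscheme1 : ∀ u : ℝ → X, IsSolPDE T DB L g u →
      ∀ v : (N : ℕ) → ℝ → Fin N → ℝ, (∀ N, N₀ ≤ N → IsSolODE T (A N) (gN N) (v N)) →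
      (∀ N, N₀ ≤ N → ∃ hm : u 0 ∈ DB, v N 0 = P N ⟨u 0, hm⟩) →
      TendstoUniformlyOn (fun N t => Φ N (v N t)) u atTop (Set.Icc 0 T))
    (hscheme2 : ∀ v : DB, Tendsto (fun N => nN N (P N v)) atTop (nhds ‖(v : X)‖))
    -- the nominal trajectory `u` with `u(0) ∈ W` and its approximations `u^N`
    (ρ : ℝ) (hρ : 0 < ρ)
    (u : ℝ → X) (hu : IsSolPDE T DB L g u)
    (hu0 : u 0 ∈ Submodule.span ℝ (Set.range e))
    (uN : ∀ N : ℕ, ℝ → Fin N → ℝ) (huN : ∀ N, N₀ ≤ N → IsSolODE T (A N) (gN N) (uN N))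
    (huN0 : ∀ N, N₀ ≤ N → ∃ hm : u 0 ∈ DB, uN N 0 = P N ⟨u 0, hm⟩)
    -- the given family of ODE solutions
    (uhatN : ∀ N : ℕ, ℝ → Fin N → ℝ)
    (huhatN : ∀ N, N₀ ≤ N → IsSolODE T (A N) (gN N) (uhatN N))
    (huhatN0 : ∀ N, N₀ ≤ N →
      uhatN N 0 ∈ Submodule.span ℝ (Set.range fun i : Fin s => P N ⟨e i, he i⟩))
    (huhatNρ : ∀ N, N₀ ≤ N → nN N (uhatN N 0 - uN N 0) = ρ) :
    ∃ φ : ℕ → ℕ, StrictMono φ ∧ (∀ k, N₀ ≤ φ k) ∧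
      ∃ uhat : ℝ → X, IsSolPDE T DB L g uhat ∧
        uhat 0 ∈ Submodule.span ℝ (Set.range e) ∧ ‖uhat 0 - u 0‖ = ρ ∧
        TendstoUniformlyOn (fun k t => Φ (φ k) (uhatN (φ k) t)) uhat atTop (Set.Icc 0 T) :=
  subsequence_convergence_linear_general DB L g hexist e he hli N₀ A gN P Φ nN hscheme1 hscheme2 ρ u
    hu hu0 uN huN huN0 uhatN huhatN huhatN0 huhatNρ
end

section
/- Gramian characterization of the unobservability index (orthonormal basis): let V be a finite-dimensional real inner product space, A : V → V linear, g : [0,T] → V continuous, Θ : V → ℝ^p linear, and let e₁,…,e_s be orthonormal vectors in V spanning W. Let u be the solution of u' = −Au + g with u(0) ∈ W, and for ρ > 0 define ε = inf{ (∫₀ᵀ ‖Θ(û(t)) − Θ(u(t))‖² dt)^{1/2} : û solves û' = −Aû + g, û(0) ∈ W, ‖û(0) − u(0)‖ = ρ }. Let G ∈ ℝ^{s×s} be the Gramian with entries G_{ij} = ∫₀ᵀ ⟨Θ(e^{−At}e_i), Θ(e^{−At}e_j)⟩ dt and let σ_min be its smallest eigenvalue. Then ε² = σ_min ρ²; in particular,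 if σ_min > 0, the unobservability index is ρ/ε = 1/√σ_min. -/
/-!
Two solutions of `u' = -A u + g` differ by the free flow `e^{-tA}` applied to their initial
difference `∑ ξᵢ eᵢ`, and since the `eᵢ` are orthonormal, `‖∑ ξᵢ eᵢ‖ = ‖ξ‖`. The output energy
of that difference is the quadratic form `ξᵀ G ξ`, so `ε²` is the minimum of the Rayleigh
quotient of `G` over the sphere `‖ξ‖ = ρ`, i.e. `σ_min ρ²`, attained at an eigenvector of `σ_min`.
-/

open Set Matrix

section LinearFlow

variable {V : Type*} [NormedAddCommGroup V] [NormedSpace ℝ V] [CompleteSpace V] (A : V →L[ℝ] V)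

theorem hasDerivAt_exp_neg_smul_apply (v : V) (t : ℝ) :
    HasDerivAt (fun t : ℝ => NormedSpace.exp (-(t • A)) v)
      (-A (NormedSpace.exp (-(t • A)) v)) t := by
  simp_rw [← smul_neg]
  simpa using (hasDerivAt_exp_smul_const' (𝕂 := ℝ) (-A) t).clm_apply (hasDerivAt_const t v)

theorem continuous_exp_neg_smul_apply (v : V) :
    Continuous fun t : ℝ => NormedSpace.exp (-(t • A)) v :=
  continuous_iff_continuousAt.2 fun t => (hasDerivAt_exp_neg_smul_apply A v t).continuousAt

theorem exp_neg_smul_apply_exp_smul_apply (t : ℝ) (v : V) :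
    NormedSpace.exp (-(t • A)) (NormedSpace.exp (t • A) v) = v := by
  -- `NormedSpace.exp_add_of_commute` needs a normed `ℚ`-algebra, which is not an instance here
  let +nondep : NormedAlgebra ℚ (V →L[ℝ] V) := .restrictScalars ℚ ℝ _
  rw [← mul_apply_eq_comp, ← NormedSpace.exp_add_of_commute
    (Commute.refl (t • A)).neg_left, neg_add_cancel, NormedSpace.exp_zero,
    one_apply_eq_self]

theorem eq_exp_neg_smul_apply_of_hasDerivAt {T : ℝ} {w : ℝ → V}
    (hw : ContinuousOn w (Icc 0 T)) (hw' : ∀ t ∈ Ioc 0 T, HasDerivAt w (-A (w t)) t) :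
    ∀ t ∈ Icc 0 T, w t = NormedSpace.exp (-(t • A)) (w 0) := by
  intro t ht
  -- uniqueness backwards from time `t`, since no derivative at `0` is assumed
  have hback := ODE_solution_unique_of_mem_Icc_left (v := fun _ x => -A x) (s := fun _ => univ)
    (K := ‖A‖₊) (f := w)
    (g := fun τ => NormedSpace.exp (-(τ • A)) (NormedSpace.exp (t • A) (w t)))
    (fun _ _ => (A.lipschitz.neg).lipschitzOnWith) (hw.mono (Icc_subset_Icc_right ht.2))
    (fun τ hτ => (hw' τ ⟨hτ.1, hτ.2.trans ht.2⟩).hasDerivWithinAt) (fun _ _ => mem_univ _)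
    (continuous_exp_neg_smul_apply A _).continuousOn
    (fun τ _ => (hasDerivAt_exp_neg_smul_apply A _ τ).hasDerivWithinAt) (fun _ _ => mem_univ _)
    (exp_neg_smul_apply_exp_smul_apply A t (w t)).symm ⟨le_rfl, ht.1⟩
  simp only [zero_smul, neg_zero, NormedSpace.exp_zero, one_apply_eq_self] at hback
  rw [hback, exp_neg_smul_apply_exp_smul_apply]

end LinearFlow

section Gram

variable {E : Type*} [NormedAddCommGroup E] [InnerProductSpace ℝ E] {ι : Type*} [Fintype ι]

theorem norm_sum_smul_sq (ξ : ι → ℝ) (v : ι → E) :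
    ‖∑ i, ξ i • v i‖ ^ 2 = ∑ i, ∑ j, ξ i * ξ j * inner ℝ (v i) (v j) := by
  simp only [← real_inner_self_eq_norm_sq, sum_inner, inner_sum, real_inner_smul_left,
    real_inner_smul_right]
  exact Finset.sum_congr rfl fun i _ => Finset.sum_congr rfl fun j _ => by
    rw [real_inner_comm]; ring

theorem Orthonormal.norm_sum_smul_sq {e : ι → E} (he : Orthonormal ℝ e) (ξ : ι → ℝ) :
    ‖∑ i, ξ i • e i‖ ^ 2 = ξ ⬝ᵥ ξ := by
  rw [← real_inner_self_eq_norm_sq, he.inner_sum]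
  rfl

theorem intervalIntegral_norm_sum_smul_sq {f : ι → ℝ → E} (hf : ∀ i, Continuous (f i))
    (ξ : ι → ℝ) (a b : ℝ) :
    ∫ t in a..b, ‖∑ i, ξ i • f i t‖ ^ 2 =
      ξ ⬝ᵥ Matrix.of (fun i j => ∫ t in a..b, inner ℝ (f i t) (f j t)) *ᵥ ξ := by
  have hcont : ∀ i j, Continuous fun t => ξ i * ξ j * inner ℝ (f i t) (f j t) := fun i j =>
    continuous_const.mul ((hf i).inner (hf j))
  simp only [norm_sum_smul_sq]
  rw [intervalIntegral.integral_finsetSum fun i _ =>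
    (continuous_finsetSum _ fun j _ => hcont i j).intervalIntegrable a b]
  simp only [intervalIntegral.integral_finsetSum fun j _ => (hcont _ j).intervalIntegrable a b,
    intervalIntegral.integral_const_mul, dotProduct, mulVec, of_apply, Finset.mul_sum]
  exact Finset.sum_congr rfl fun i _ => Finset.sum_congr rfl fun j _ => by ring

end Gram

namespace Matrix.IsHermitian

variable {n : Type*} [Fintype n] [DecidableEq n] {G : Matrix n n ℝ}

theorem mul_dotProduct_self_le (hG : G.IsHermitian) {σ : ℝ}
    (hσ : σ ∈ lowerBounds {μ | ∃ ξ : n → ℝ, ξ ≠ 0 ∧ G *ᵥ ξ = μ • ξ}) (ξ : n → ℝ) :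
    σ * (ξ ⬝ᵥ ξ) ≤ ξ ⬝ᵥ G *ᵥ ξ := by
  -- `G - σ • 1` is positive semidefinite: its eigenvalues are those of `G` minus `σ`
  have hH : (G - σ • 1).IsHermitian := hG.sub (isHermitian_one.smul (IsSelfAdjoint.all σ))
  have heig : ∀ k, 0 ≤ hH.eigenvalues k := fun k => by
    have hv := hH.mulVec_eigenvectorBasis k
    rw [sub_mulVec, smul_mulVec, one_mulVec, sub_eq_iff_eq_add, ← add_smul] at hv
    have hne : ⇑(hH.eigenvectorBasis k) ≠ 0 := fun h =>
      hH.eigenvectorBasis.orthonormal.ne_zero k (by ext i; exact congrFun h i)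
    linarith [hσ ⟨_, hne, hv⟩]
  have := (hH.posSemidef_iff_eigenvalues_nonneg.mpr heig).dotProduct_mulVec_nonneg ξ
  rw [star_trivial, sub_mulVec, dotProduct_sub, smul_mulVec, one_mulVec, dotProduct_smul,
    smul_eq_mul] at this
  linarith

theorem isLeast_dotProduct_mulVec_image (hG : G.IsHermitian) {σ : ℝ}
    (hσ : IsLeast {μ | ∃ ξ : n → ℝ, ξ ≠ 0 ∧ G *ᵥ ξ = μ • ξ} σ) {c : ℝ} (hc : 0 ≤ c) :
    IsLeast ((fun ξ => ξ ⬝ᵥ G *ᵥ ξ) '' {ξ | ξ ⬝ᵥ ξ = c}) (σ * c) := by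
  refine ⟨?_, ?_⟩
  · obtain ⟨ξ, hξ0, hξ⟩ := hσ.1
    have hpos : 0 < ξ ⬝ᵥ ξ := dotProduct_self_star_pos_iff.2 hξ0
    have hk : √(c / (ξ ⬝ᵥ ξ)) * √(c / (ξ ⬝ᵥ ξ)) * (ξ ⬝ᵥ ξ) = c := by
      rw [Real.mul_self_sqrt (div_nonneg hc hpos.le), div_mul_cancel₀ _ hpos.ne']
    refine ⟨√(c / (ξ ⬝ᵥ ξ)) • ξ, ?_, ?_⟩
    · simp only [mem_ofPred_eq, smul_dotProduct, dotProduct_smul, smul_eq_mul, ← mul_assoc, hk]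
    · simp only [mulVec_smul, hξ, smul_dotProduct, dotProduct_smul, smul_eq_mul]
      linear_combination σ * hk
  · rintro _ ⟨ξ, rfl : ξ ⬝ᵥ ξ = c, rfl⟩
    exact hG.mul_dotProduct_self_le hσ.2 ξ

end Matrix.IsHermitian

section OutputGramian

variable {V : Type*} [NormedAddCommGroup V] [InnerProductSpace ℝ V]
  {E : Type*} [NormedAddCommGroup E] [InnerProductSpace ℝ E] {ι : Type*}
  (A : V →L[ℝ] V) (Θ : V →ₗ[ℝ] E) (e : ι → V) (T : ℝ)

noncomputable def outputGramian : Matrix ι ι ℝ :=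
  of fun i j => ∫ t in (0 : ℝ)..T,
    inner ℝ (Θ (NormedSpace.exp (-(t • A)) (e i))) (Θ (NormedSpace.exp (-(t • A)) (e j)))

theorem outputGramian_isHermitian : (outputGramian A Θ e T).IsHermitian :=
  IsHermitian.ext fun i j => by simp [outputGramian, real_inner_comm]

variable {Θ} in
theorem dotProduct_outputGramian_mulVec [CompleteSpace V] [Fintype ι] (hΘ : Continuous Θ)
    (ξ : ι → ℝ) :
    ξ ⬝ᵥ outputGramian A Θ e T *ᵥ ξ =
      ∫ t in (0 : ℝ)..T, ‖Θ (NormedSpace.exp (-(t • A)) (∑ i, ξ i • e i))‖ ^ 2 := by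
  simp only [map_sum, map_smul]
  exact (intervalIntegral_norm_sum_smul_sq
    (fun i => hΘ.comp (continuous_exp_neg_smul_apply A (e i))) ξ 0 T).symm

variable {A Θ e T} in
theorem dotProduct_outputGramian_mulVec_nonneg [CompleteSpace V] [Fintype ι]
    (hΘ : Continuous Θ) (hT : 0 ≤ T) (ξ : ι → ℝ) :
    0 ≤ ξ ⬝ᵥ outputGramian A Θ e T *ᵥ ξ := by
  rw [dotProduct_outputGramian_mulVec A e T hΘ]
  exact intervalIntegral.integral_nonneg hT fun _ _ => sq_nonneg _

end OutputGramian

theorem outputDistances_eq_image {V : Type*} [NormedAddCommGroup V] [InnerProductSpace ℝ V]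
    [CompleteSpace V] {E : Type*} [NormedAddCommGroup E] [InnerProductSpace ℝ E]
    {ι : Type*} [Fintype ι] {T : ℝ} (hT : 0 ≤ T) (A : V →L[ℝ] V) (g : ℝ → V)
    {Θ : V →ₗ[ℝ] E} (hΘ : Continuous Θ) {e : ι → V} (he : Orthonormal ℝ e)
    {u : ℝ → V} (hu : ContinuousOn u (Icc 0 T))
    (hu' : ∀ t ∈ Ioc 0 T, HasDerivAt u (g t - A (u t)) t)
    (hu0 : u 0 ∈ Submodule.span ℝ (range e)) {ρ : ℝ} (hρ : 0 ≤ ρ) :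
    {r | ∃ uhat : ℝ → V, ContinuousOn uhat (Icc 0 T) ∧
      (∀ t ∈ Ioc 0 T, HasDerivAt uhat (g t - A (uhat t)) t) ∧
      uhat 0 ∈ Submodule.span ℝ (range e) ∧ ‖uhat 0 - u 0‖ = ρ ∧
      r = √(∫ t in (0 : ℝ)..T, ‖Θ (uhat t) - Θ (u t)‖ ^ 2)} =
    (fun ξ => √(ξ ⬝ᵥ outputGramian A Θ e T *ᵥ ξ)) '' {ξ | ξ ⬝ᵥ ξ = ρ ^ 2} := by
  ext r
  constructor
  · rintro ⟨uhat, huhat, huhat', huhat0, hnorm, rfl⟩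
    obtain ⟨ξ, hξ⟩ := (Submodule.mem_span_range_iff_exists_fun ℝ).1
      (Submodule.sub_mem _ huhat0 hu0)
    have hflow := eq_exp_neg_smul_apply_of_hasDerivAt A (w := fun t => uhat t - u t)
      (huhat.sub hu) fun t ht =>
        ((huhat' t ht).sub (hu' t ht)).congr_deriv (by rw [map_sub]; abel)
    refine ⟨ξ, ?_, ?_⟩
    · rw [mem_ofPred_eq, ← he.norm_sum_smul_sq, hξ, hnorm]
    · dsimp only
      rw [dotProduct_outputGramian_mulVec A e T hΘ, hξ]
      congr 1
      refine intervalIntegral.integral_congr fun t ht => ?_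
      rw [uIcc_of_le hT] at ht
      simp only [← map_sub, hflow t ht]
  · rintro ⟨ξ, hξ, rfl⟩
    refine ⟨fun t => u t + NormedSpace.exp (-(t • A)) (∑ i, ξ i • e i),
      hu.add (continuous_exp_neg_smul_apply A _).continuousOn, fun t ht => ?_, ?_, ?_, ?_⟩
    · exact ((hu' t ht).add (hasDerivAt_exp_neg_smul_apply A _ t)).congr_deriv
        (by rw [map_add]; abel)
    · simpa only [zero_smul, neg_zero, NormedSpace.exp_zero, one_apply_eq_self] using
        Submodule.add_mem _ hu0 (Submodule.sum_mem _ fun i _ =>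
          Submodule.smul_mem _ _ (Submodule.subset_span (mem_range_self i)))
    · simp only [zero_smul, neg_zero, NormedSpace.exp_zero, one_apply_eq_self,
        add_sub_cancel_left]
      rw [← sq_eq_sq₀ (norm_nonneg _) hρ, he.norm_sum_smul_sq, hξ]
    · simp only [map_add, add_sub_cancel_left, dotProduct_outputGramian_mulVec A e T hΘ]

theorem unobservability_index_gramian_general
    {V : Type*} [NormedAddCommGroup V] [InnerProductSpace ℝ V] [FiniteDimensional ℝ V]
    {T : ℝ} (hT : 0 < T)
    (A : V →L[ℝ] V) (g : ℝ → V)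
    {p : ℕ} (Θ : V →ₗ[ℝ] EuclideanSpace ℝ (Fin p))
    {s : ℕ} (e : Fin s → V) (he : Orthonormal ℝ e)
    -- the nominal solution `u` with `u 0 ∈ W`
    (u : ℝ → V) (hu : ContinuousOn u (Set.Icc 0 T))
    (hu' : ∀ t ∈ Set.Ioc 0 T, HasDerivAt u (g t - A (u t)) t)
    (hu0 : u 0 ∈ Submodule.span ℝ (Set.range e))
    (ρ : ℝ) (hρ : 0 < ρ)
    -- the unobservability quantity
    (ε : ℝ) (hε : ε = sInf {r | ∃ uhat : ℝ → V, ContinuousOn uhat (Set.Icc 0 T) ∧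
      (∀ t ∈ Set.Ioc 0 T, HasDerivAt uhat (g t - A (uhat t)) t) ∧
      uhat 0 ∈ Submodule.span ℝ (Set.range e) ∧ ‖uhat 0 - u 0‖ = ρ ∧
      r = Real.sqrt (∫ t in (0:ℝ)..T, ‖Θ (uhat t) - Θ (u t)‖ ^ 2)})
    -- the Gramian matrix and its smallest eigenvalue
    (G : Matrix (Fin s) (Fin s) ℝ)
    (hG : ∀ i j, G i j = ∫ t in (0:ℝ)..T,
      (inner ℝ (Θ ((NormedSpace.exp (-(t • A))) (e i)))
        (Θ ((NormedSpace.exp (-(t • A))) (e j))) : ℝ))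
    (σmin : ℝ)
    (hσ : IsLeast {σ : ℝ | ∃ ξ : Fin s → ℝ, ξ ≠ 0 ∧ G.mulVec ξ = σ • ξ} σmin) :
    ε ^ 2 = σmin * ρ ^ 2 ∧ (0 < σmin → ρ / ε = 1 / Real.sqrt σmin) := by
  have hΘ : Continuous Θ := Θ.continuous_of_finiteDimensional
  obtain rfl : G = outputGramian A Θ e T := Matrix.ext hG
  have hleast := (outputGramian_isHermitian A Θ e T).isLeast_dotProduct_mulVec_image hσ
    (sq_nonneg ρ)
  have hsqrt := Real.sqrt_monotone.map_isLeast hleast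
  rw [image_image, ← outputDistances_eq_image hT.le A g hΘ he hu hu' hu0 hρ.le] at hsqrt
  have hε' : ε = √(σmin * ρ ^ 2) := by rw [hε, hsqrt.csInf_eq]
  have hnonneg : 0 ≤ σmin * ρ ^ 2 := by
    obtain ⟨ξ, -, hξ⟩ := hleast.1
    exact hξ ▸ dotProduct_outputGramian_mulVec_nonneg hΘ hT.le ξ
  refine ⟨by rw [hε', Real.sq_sqrt hnonneg], fun hpos => ?_⟩
  rw [hε', Real.sqrt_mul hpos.le, Real.sqrt_sq hρ.le]
  field_simp

/-- Gramian characterization of the unobservability index for a linear ODE system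
`u' = -Au + g` on a finite-dimensional inner product space with orthonormal
`e₁,…,e_s` spanning the space for estimation `W`: `ε² = σ_min ρ²`, where `σ_min` is
the smallest eigenvalue of the Gramian `G_{ij} = ∫₀ᵀ ⟨Θ(e^{−At}eᵢ), Θ(e^{−At}eⱼ)⟩ dt`;
in particular if `σ_min > 0` then `ρ/ε = 1/√σ_min`. -/
theorem unobservability_index_gramian
    {V : Type*} [NormedAddCommGroup V] [InnerProductSpace ℝ V] [FiniteDimensional ℝ V]
    {T : ℝ} (hT : 0 < T)
    (A : V →L[ℝ] V) (g : ℝ → V) (hg : ContinuousOn g (Set.Icc 0 T))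
    {p : ℕ} (Θ : V →ₗ[ℝ] EuclideanSpace ℝ (Fin p))
    {s : ℕ} (e : Fin s → V) (he : Orthonormal ℝ e)
    -- the nominal solution `u` with `u 0 ∈ W`
    (u : ℝ → V) (hu : ContinuousOn u (Set.Icc 0 T))
    (hu' : ∀ t ∈ Set.Ioc 0 T, HasDerivAt u (g t - A (u t)) t)
    (hu0 : u 0 ∈ Submodule.span ℝ (Set.range e))
    (ρ : ℝ) (hρ : 0 < ρ)
    -- the unobservability quantity
    (ε : ℝ) (hε : ε = sInf {r | ∃ uhat : ℝ → V, ContinuousOn uhat (Set.Icc 0 T) ∧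
      (∀ t ∈ Set.Ioc 0 T, HasDerivAt uhat (g t - A (uhat t)) t) ∧
      uhat 0 ∈ Submodule.span ℝ (Set.range e) ∧ ‖uhat 0 - u 0‖ = ρ ∧
      r = Real.sqrt (∫ t in (0:ℝ)..T, ‖Θ (uhat t) - Θ (u t)‖ ^ 2)})
    -- the Gramian matrix and its smallest eigenvalue
    (G : Matrix (Fin s) (Fin s) ℝ)
    (hG : ∀ i j, G i j = ∫ t in (0:ℝ)..T,
      (inner ℝ (Θ ((NormedSpace.exp (-(t • A))) (e i)))
        (Θ ((NormedSpace.exp (-(t • A))) (e j))) : ℝ))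
    (σmin : ℝ)
    (hσ : IsLeast {σ : ℝ | ∃ ξ : Fin s → ℝ, ξ ≠ 0 ∧ G.mulVec ξ = σ • ξ} σmin) :
    ε ^ 2 = σmin * ρ ^ 2 ∧ (0 < σmin → ρ / ε = 1 / Real.sqrt σmin) :=
  unobservability_index_gramian_general hT A g Θ e he u hu hu' hu0 ρ hρ ε hε G hG σmin hσ
end
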